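/- Lemma 3.3, part 2, matrix-level implications (deterministic). Let U and U* be n×r real matrices with orthonormal columns; let B̃ be an r×q real matrix of rank r with columns b̃_k, set x*_k := U*b̃_k and X* := U*B̃, σ⁺ := σ₁(B̃), σ⁻ := σ_r(B̃), κ := σ⁺/σ⁻. Suppose δ satisfies ‖(I − UUᵀ)U*‖_F ≤ δ ≤ 0.1/κ, and suppose the vectors b̂_k ∈ ℝ^r satisfy ‖Uᵀx*_k − b̂_k‖ ≤ 0.4·‖(I − UUᵀ)U*b̃_k‖ for every k ∈ [q]. Let B̂ be the r×q matrix with columns b̂_k, G := UᵀX*, and X̂ := UB̂. Then: (a) ‖G − B̂‖_F ≤ 0.4·δ·σ⁺; (b) ‖X* − X̂‖_F ≤ √1.16·δ·σ⁺; (c) σ_r(B̂) ≥ 0.9·σ⁻; (d) σ₁(B̂) ≤ (1 + 0.4δ)·σ⁺ ≤ 1.04·σ⁺. -/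
import Mathlib


open MeasureTheory ProbabilityTheory Matrix
open scoped ENNReal

noncomputable section

/-- Euclidean norm of a finitely-indexed real vector. -/
def vnorm {ι : Type*} [Fintype ι] (v : ι → ℝ) : ℝ := Real.sqrt (∑ i, v i ^ 2)

/-- Frobenius norm of a real matrix. -/
def frob {ι ι' : Type*} [Fintype ι] [Fintype ι'] (M : Matrix ι ι' ℝ) : ℝ :=
  Real.sqrt (∑ i, ∑ j, M i j ^ 2)

/-- Spectral (ℓ2 operator) norm of a real matrix. -/
def spec {ι ι' : Type*} [Fintype ι] [Fintype ι'] (M : Matrix ι ι' ℝ) : ℝ :=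
  sSup {c | ∃ z, vnorm z = 1 ∧ c = vnorm (M.mulVec z)}

/-- Smallest singular value of an r×q matrix with r ≤ q (or of a square matrix):
the minimum of ‖Bᵀw‖ over unit vectors w. -/
def sigMin {ι ι' : Type*} [Fintype ι] [Fintype ι'] (B : Matrix ι ι' ℝ) : ℝ :=
  sInf {c | ∃ w, vnorm w = 1 ∧ c = vnorm (Bᵀ.mulVec w)}

/-- The k-th column of a matrix. -/
def matCol {ι ι' : Type*} (B : Matrix ι ι' ℝ) (k : ι') : ι → ℝ := fun i => B i k

/-- Subspace distance SD(U₁,U₂) := ‖(I − U₁U₁ᵀ)U₂‖_F. -/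
def SD {n r : ℕ} (U₁ U₂ : Matrix (Fin n) (Fin r) ℝ) : ℝ :=
  frob ((1 - U₁ * U₁ᵀ) * U₂)

/-- The standard Gaussian measure on ℝ. -/
def stdGaussian : Measure ℝ := gaussianReal 0 1

instance : IsProbabilityMeasure stdGaussian :=
  inferInstanceAs (IsProbabilityMeasure (gaussianReal 0 1))

/-- A standard Gaussian random vector in ℝⁿ (i.i.d. N(0,1) coordinates). -/
def gaussianVec (n : ℕ) : Measure (Fin n → ℝ) := Measure.pi fun _ => stdGaussian

instance (n : ℕ) : IsProbabilityMeasure (gaussianVec n) := by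
  unfold gaussianVec; infer_instance

/-- i.i.d. standard Gaussian random vectors a_{k i} ∈ ℝⁿ, k ∈ [q], i ∈ [m]. -/
def gaussianMatrices (q m n : ℕ) : Measure (Fin q → Fin m → Fin n → ℝ) :=
  Measure.pi fun _ => Measure.pi fun _ => gaussianVec n

instance (q m n : ℕ) : IsProbabilityMeasure (gaussianMatrices q m n) := by
  unfold gaussianMatrices; infer_instance

/-- Truncated spectral-initialization matrix X̂₀ = (1/m) Σ_{k,i} a_ki y_ki 1{y_ki² ≤ α} e_kᵀ. -/
def initMat {n q m : ℕ} (xstar : Fin q → Fin n → ℝ) (α : ℝ)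
    (ω : Fin q → Fin m → Fin n → ℝ) : Matrix (Fin n) (Fin q) ℝ :=
  Matrix.of fun j k => (1 / (m : ℝ)) * ∑ i, ω k i j * (ω k i ⬝ᵥ xstar k) *
    (if (ω k i ⬝ᵥ xstar k) ^ 2 ≤ α then 1 else 0)

/-- Data-dependent truncation threshold α := C̃ Σ_{k,i} y_ki² / (mq). -/
def initAlpha {n q m : ℕ} (xstar : Fin q → Fin n → ℝ) (Ctil : ℝ)
    (ω : Fin q → Fin m → Fin n → ℝ) : ℝ :=
  Ctil * ((∑ k, ∑ i, (ω k i ⬝ᵥ xstar k) ^ 2) / ((m : ℝ) * q))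

/-- β(α) := E[ζ² 1{‖x‖² ζ² ≤ α}] for ζ standard Gaussian. -/
def betaK (normx α : ℝ) : ℝ :=
  ∫ z, z ^ 2 * (if normx ^ 2 * z ^ 2 ≤ α then 1 else 0) ∂stdGaussian

/-- The least-squares estimate b̂ := (UᵀAᵀAU)⁻¹ Uᵀ Aᵀ A x. -/
def lsEst {n r m : ℕ} (U : Matrix (Fin n) (Fin r) ℝ) (A : Matrix (Fin m) (Fin n) ℝ)
    (x : Fin n → ℝ) : Fin r → ℝ :=
  ((Uᵀ * Aᵀ * A * U)⁻¹ * Uᵀ * Aᵀ * A).mulVec x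

/-- Gradient w.r.t. U of the squared loss: Σ_k Aᵀ(AUb̂_k − Ax*_k)b̂_kᵀ. -/
def gradU {n r q m : ℕ} (U : Matrix (Fin n) (Fin r) ℝ)
    (A : Fin q → Matrix (Fin m) (Fin n) ℝ) (xstar : Fin q → Fin n → ℝ)
    (bhat : Fin q → Fin r → ℝ) : Matrix (Fin n) (Fin r) ℝ :=
  ∑ k, (A k)ᵀ * vecMulVec ((A k).mulVec (U.mulVec (bhat k) - xstar k)) (bhat k)

/-- `U` has orthonormal columns whose span is the span of eigenvectors of `S`
corresponding to its `r` largest eigenvalues: `S` maps the column span of `U` into itself,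
and wᵀSw ≥ zᵀSz for unit w in the span and unit z orthogonal to it. -/
def IsTopREigenBasis {n r : ℕ} (S : Matrix (Fin n) (Fin n) ℝ)
    (U : Matrix (Fin n) (Fin r) ℝ) : Prop :=
  Uᵀ * U = 1 ∧ (∃ M : Matrix (Fin r) (Fin r) ℝ, S * U = U * M) ∧
  ∀ w z : Fin n → ℝ, (∃ cvec : Fin r → ℝ, w = U.mulVec cvec) → Uᵀ.mulVec z = 0 →
    vnorm w = 1 → vnorm z = 1 → z ⬝ᵥ S.mulVec z ≤ w ⬝ᵥ S.mulVec w

/-- Sample sizes for the 2T+1 sample splits: batch τ ∈ {0,…,T} has m τ rows,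
batch τ = T + t (t ∈ {1,…,T}) has m t rows. -/
def msize (m : ℕ → ℕ) (T τ : ℕ) : ℕ := if τ ≤ T then m τ else m (τ - T)

/-- The joint distribution of all 2T+1 independent sample batches of i.i.d. standard
Gaussian measurement vectors. -/
def splitGauss (m : ℕ → ℕ) (T q n : ℕ) :
    Measure (∀ τ : Fin (2 * T + 1), Fin q → Fin (msize m T τ.1) → Fin n → ℝ) :=
  Measure.pi fun τ => gaussianMatrices q (msize m T τ.1) n

instance (m : ℕ → ℕ) (T q n : ℕ) : IsProbabilityMeasure (splitGauss m T q n) := by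
  unfold splitGauss; infer_instance

end

section lemma33helpers
variable {ι ι' ι'' : Type*} [Fintype ι] [Fintype ι'] [Fintype ι'']

private lemma vnorm_nonneg (v : ι → ℝ) : 0 ≤ vnorm v := Real.sqrt_nonneg _

private lemma vnorm_sq (v : ι → ℝ) : vnorm v ^ 2 = ∑ i, v i ^ 2 :=
  Real.sq_sqrt (Finset.sum_nonneg fun _ _ => sq_nonneg _)

private lemma vnorm_sq_dot (v : ι → ℝ) : vnorm v ^ 2 = v ⬝ᵥ v := by
  rw [vnorm_sq]; simp [dotProduct, sq]

private lemma sq_le_sq_le {a b : ℝ} (ha : 0 ≤ a) (hb : 0 ≤ b) (h : a ^ 2 ≤ b ^ 2) : a ≤ b := by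
  nlinarith

private lemma dot_le (u v : ι → ℝ) : u ⬝ᵥ v ≤ vnorm u * vnorm v := by
  have h := Finset.sum_mul_sq_le_sq_mul_sq Finset.univ u v
  have h2 : (u ⬝ᵥ v) ^ 2 ≤ (vnorm u * vnorm v) ^ 2 := by
    rw [mul_pow, vnorm_sq, vnorm_sq]; simpa [dotProduct] using h
  have h3 : |u ⬝ᵥ v| ≤ vnorm u * vnorm v :=
    sq_le_sq_le (abs_nonneg _) (mul_nonneg (vnorm_nonneg u) (vnorm_nonneg v)) (by rwa [sq_abs])
  exact (le_abs_self _).trans h3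

private lemma pyth (u v : ι → ℝ) (h : u ⬝ᵥ v = 0) :
    vnorm (u + v) ^ 2 = vnorm u ^ 2 + vnorm v ^ 2 := by
  have := vnorm_sq_dot (u + v)
  rw [vnorm_sq_dot u, vnorm_sq_dot v, this]
  have hvu : v ⬝ᵥ u = 0 := by rwa [dotProduct_comm]
  simp [add_dotProduct, dotProduct_add, h, hvu]

private lemma vnorm_triangle (u v : ι → ℝ) : vnorm (u + v) ≤ vnorm u + vnorm v := by
  apply sq_le_sq_le (vnorm_nonneg _) (add_nonneg (vnorm_nonneg _) (vnorm_nonneg _))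
  have h1 : vnorm (u + v) ^ 2 = vnorm u ^ 2 + 2 * (u ⬝ᵥ v) + vnorm v ^ 2 := by
    rw [vnorm_sq_dot, vnorm_sq_dot, vnorm_sq_dot]
    simp [add_dotProduct, dotProduct_add, dotProduct_comm v u]; ring
  have h2 := dot_le u v
  nlinarith

private lemma vnorm_smul (c : ℝ) (v : ι → ℝ) : vnorm (c • v) = |c| * vnorm v := by
  simp only [vnorm, Pi.smul_apply, smul_eq_mul, mul_pow, ← Finset.mul_sum]
  rw [Real.sqrt_mul (sq_nonneg c), Real.sqrt_sq_eq_abs]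

private lemma frob_nonneg (M : Matrix ι ι' ℝ) : 0 ≤ frob M := Real.sqrt_nonneg _

private lemma frob_sq (M : Matrix ι ι' ℝ) : frob M ^ 2 = ∑ i, ∑ j, M i j ^ 2 :=
  Real.sq_sqrt (Finset.sum_nonneg fun _ _ => Finset.sum_nonneg fun _ _ => sq_nonneg _)

private lemma frob_transpose (M : Matrix ι ι' ℝ) : frob Mᵀ = frob M := by
  unfold frob; rw [Finset.sum_comm]; rfl

private lemma frob_sq_cols (M : Matrix ι ι' ℝ) : frob M ^ 2 = ∑ k, vnorm (matCol M k) ^ 2 := by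
  rw [frob_sq, Finset.sum_comm]
  exact Finset.sum_congr rfl fun k _ => (vnorm_sq _).symm

private lemma frob_sq_rows (M : Matrix ι ι' ℝ) : frob M ^ 2 = ∑ i, vnorm (M i) ^ 2 := by
  rw [frob_sq]
  exact Finset.sum_congr rfl fun i _ => (vnorm_sq _).symm

private lemma mulVec_le_frob (M : Matrix ι ι' ℝ) (z : ι' → ℝ) :
    vnorm (M.mulVec z) ≤ frob M * vnorm z := by
  apply sq_le_sq_le (vnorm_nonneg _) (mul_nonneg (frob_nonneg _) (vnorm_nonneg _))
  rw [mul_pow, vnorm_sq, frob_sq_rows, Finset.sum_mul]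
  apply Finset.sum_le_sum
  intro i _
  have h := Finset.sum_mul_sq_le_sq_mul_sq Finset.univ (M i) z
  calc M.mulVec z i ^ 2 = (∑ j, M i j * z j) ^ 2 := by rfl
    _ ≤ (∑ j, M i j ^ 2) * ∑ j, z j ^ 2 := h
    _ = vnorm (M i) ^ 2 * vnorm z ^ 2 := by rw [vnorm_sq, vnorm_sq]

private lemma vnorm_eq_of_sq_eq {v : ι → ℝ} {w : ι' → ℝ} (h : vnorm v ^ 2 = vnorm w ^ 2) :
    vnorm v = vnorm w :=
  le_antisymm (sq_le_sq_le (vnorm_nonneg v) (vnorm_nonneg w) h.le)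
    (sq_le_sq_le (vnorm_nonneg w) (vnorm_nonneg v) h.ge)

private lemma vnorm_zero : vnorm (0 : ι → ℝ) = 0 := by simp [vnorm]

private lemma vnorm_eq_zero {v : ι → ℝ} (h : vnorm v = 0) : v = 0 := by
  have h2 : ∑ i, v i ^ 2 = 0 := by
    have := vnorm_sq v; rw [h] at this; simpa using this.symm
  funext i
  have := (Finset.sum_eq_zero_iff_of_nonneg (fun i _ => sq_nonneg (v i))).mp h2 i
    (Finset.mem_univ i)
  exact pow_eq_zero_iff two_ne_zero |>.mp this

private lemma spec_bddAbove (M : Matrix ι ι' ℝ) :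
    BddAbove {c | ∃ z, vnorm z = 1 ∧ c = vnorm (M.mulVec z)} := by
  refine ⟨frob M, fun c hc => ?_⟩
  obtain ⟨z, hz, rfl⟩ := hc
  calc vnorm (M.mulVec z) ≤ frob M * vnorm z := mulVec_le_frob M z
    _ = frob M := by rw [hz, mul_one]

private lemma spec_nonneg (M : Matrix ι ι' ℝ) : 0 ≤ spec M :=
  Real.sSup_nonneg (fun c hc => by obtain ⟨z, _, rfl⟩ := hc; exact vnorm_nonneg _)

private lemma sigMin_nonneg (B : Matrix ι ι' ℝ) : 0 ≤ sigMin B :=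
  Real.sInf_nonneg (fun c hc => by obtain ⟨z, _, rfl⟩ := hc; exact vnorm_nonneg _)

private lemma mulVec_le_spec (M : Matrix ι ι' ℝ) (z : ι' → ℝ) :
    vnorm (M.mulVec z) ≤ spec M * vnorm z := by
  by_cases hz : vnorm z = 0
  · rw [vnorm_eq_zero hz]
    simp [Matrix.mulVec_zero, vnorm_zero, hz]
  · have hzpos : 0 < vnorm z := lt_of_le_of_ne (vnorm_nonneg z) (Ne.symm hz)
    set z' := (vnorm z)⁻¹ • z with hz'
    have hz1 : vnorm z' = 1 := by
      rw [hz', vnorm_smul, abs_of_nonneg (inv_nonneg.mpr hzpos.le), inv_mul_cancel₀ hz]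
    have hle := le_csSup (spec_bddAbove M)
      (⟨z', hz1, rfl⟩ : vnorm (M.mulVec z') ∈ {c | ∃ z, vnorm z = 1 ∧ c = vnorm (M.mulVec z)})
    have hMz' : vnorm (M.mulVec z') = (vnorm z)⁻¹ * vnorm (M.mulVec z) := by
      rw [hz', Matrix.mulVec_smul, vnorm_smul, abs_of_nonneg (inv_nonneg.mpr hzpos.le)]
    rw [hMz'] at hle
    have := mul_le_mul_of_nonneg_right hle hzpos.le
    rwa [inv_mul_eq_div, div_mul_cancel₀ _ hz] at this

private lemma sigMin_mulVec_ge (B : Matrix ι ι' ℝ) (v : ι → ℝ) :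
    sigMin B * vnorm v ≤ vnorm (Bᵀ.mulVec v) := by
  by_cases hv : vnorm v = 0
  · rw [hv, mul_zero]; exact vnorm_nonneg _
  · have hvpos : 0 < vnorm v := lt_of_le_of_ne (vnorm_nonneg v) (Ne.symm hv)
    set v' := (vnorm v)⁻¹ • v with hv'
    have hv1 : vnorm v' = 1 := by
      rw [hv', vnorm_smul, abs_of_nonneg (inv_nonneg.mpr hvpos.le), inv_mul_cancel₀ hv]
    have hbdd : BddBelow {c | ∃ w, vnorm w = 1 ∧ c = vnorm (Bᵀ.mulVec w)} :=
      ⟨0, fun c hc => by obtain ⟨w, _, rfl⟩ := hc; exact vnorm_nonneg _⟩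
    have hle := csInf_le hbdd (⟨v', hv1, rfl⟩ :
      vnorm (Bᵀ.mulVec v') ∈ {c | ∃ w, vnorm w = 1 ∧ c = vnorm (Bᵀ.mulVec w)})
    have hMv' : vnorm (Bᵀ.mulVec v') = (vnorm v)⁻¹ * vnorm (Bᵀ.mulVec v) := by
      rw [hv', Matrix.mulVec_smul, vnorm_smul, abs_of_nonneg (inv_nonneg.mpr hvpos.le)]
    rw [hMv'] at hle
    have := mul_le_mul_of_nonneg_right hle hvpos.le
    calc sigMin B * vnorm v ≤ (vnorm v)⁻¹ * vnorm (Bᵀ.mulVec v) * vnorm v := this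
      _ = vnorm (Bᵀ.mulVec v) := by field_simp

private lemma transpose_mulVec_le_spec (M : Matrix ι ι' ℝ) (a : ι → ℝ) :
    vnorm (Mᵀ.mulVec a) ≤ spec M * vnorm a := by
  set t := vnorm (Mᵀ.mulVec a) with ht
  by_cases h0 : t = 0
  · rw [h0]; exact mul_nonneg (spec_nonneg M) (vnorm_nonneg a)
  · have htpos : 0 < t := lt_of_le_of_ne (vnorm_nonneg _) (Ne.symm h0)
    have key : t ^ 2 ≤ vnorm a * (spec M * t) := by
      have e1 : t ^ 2 = a ⬝ᵥ M.mulVec (Mᵀ.mulVec a) := by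
        rw [ht, vnorm_sq_dot, Matrix.dotProduct_mulVec a M, ← Matrix.mulVec_transpose]
      calc t ^ 2 = a ⬝ᵥ M.mulVec (Mᵀ.mulVec a) := e1
        _ ≤ vnorm a * vnorm (M.mulVec (Mᵀ.mulVec a)) := dot_le _ _
        _ ≤ vnorm a * (spec M * t) :=
            mul_le_mul_of_nonneg_left (mulVec_le_spec M _) (vnorm_nonneg a)
    nlinarith

private lemma frob_mul_le (A : Matrix ι ι' ℝ) (B : Matrix ι' ι'' ℝ) :
    frob (A * B) ≤ frob A * spec B := by
  apply sq_le_sq_le (frob_nonneg _) (mul_nonneg (frob_nonneg _) (spec_nonneg _))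
  rw [frob_sq_rows, mul_pow, frob_sq_rows, Finset.sum_mul]
  apply Finset.sum_le_sum
  intro i _
  have hrow : (A * B) i = Bᵀ.mulVec (A i) := by
    funext j; simp [Matrix.mul_apply, Matrix.mulVec, dotProduct, mul_comm]
  rw [hrow]
  calc vnorm (Bᵀ.mulVec (A i)) ^ 2 ≤ (spec B * vnorm (A i)) ^ 2 :=
        pow_le_pow_left₀ (vnorm_nonneg _) (transpose_mulVec_le_spec B (A i)) 2
    _ = vnorm (A i) ^ 2 * spec B ^ 2 := by ring

private lemma dot_mulVec_eq (M : Matrix ι ι' ℝ) (N : Matrix ι ι'' ℝ) (p : ι' → ℝ)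
    (c : ι'' → ℝ) : (M.mulVec p) ⬝ᵥ (N.mulVec c) = p ⬝ᵥ ((Mᵀ * N).mulVec c) := by
  rw [Matrix.dotProduct_mulVec p (Mᵀ * N) c, ← Matrix.vecMul_vecMul,
    Matrix.vecMul_transpose, ← Matrix.dotProduct_mulVec]

private lemma matCol_mul (A : Matrix ι ι' ℝ) (B : Matrix ι' ι'' ℝ) (k : ι'') :
    matCol (A * B) k = A.mulVec (matCol B k) := by
  funext i; simp [matCol, Matrix.mul_apply, Matrix.mulVec, dotProduct]

private lemma matCol_sub (A B : Matrix ι ι' ℝ) (k : ι') :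
    matCol (A - B) k = matCol A k - matCol B k := rfl

private lemma frob_sub_comm (A B : Matrix ι ι' ℝ) : frob (A - B) = frob (B - A) := by
  unfold frob
  congr 1
  refine Finset.sum_congr rfl fun i _ => Finset.sum_congr rfl fun j _ => ?_
  simp only [Matrix.sub_apply]; ring

private lemma vnorm_orth_mulVec {n r : ℕ} {U : Matrix (Fin n) (Fin r) ℝ} (hU : Uᵀ * U = 1)
    (c : Fin r → ℝ) : vnorm (U.mulVec c) = vnorm c := by
  apply vnorm_eq_of_sq_eq
  rw [vnorm_sq_dot, vnorm_sq_dot, dot_mulVec_eq, hU, Matrix.one_mulVec]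

private lemma vnorm_orthT_mulVec_le {n r : ℕ} {U : Matrix (Fin n) (Fin r) ℝ}
    (hU : Uᵀ * U = 1) (v : Fin n → ℝ) : vnorm (Uᵀ.mulVec v) ≤ vnorm v := by
  set t := vnorm (Uᵀ.mulVec v) with ht
  by_cases h0 : t = 0
  · rw [h0]; exact vnorm_nonneg v
  · have htpos : 0 < t := lt_of_le_of_ne (vnorm_nonneg _) (Ne.symm h0)
    have e1 : t ^ 2 = v ⬝ᵥ (U.mulVec (Uᵀ.mulVec v)) := by
      rw [ht, vnorm_sq_dot, dot_mulVec_eq, Matrix.transpose_transpose,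
        ← Matrix.mulVec_mulVec]
    have e2 : t ^ 2 ≤ vnorm v * t := by
      rw [e1]
      calc v ⬝ᵥ (U.mulVec (Uᵀ.mulVec v)) ≤ vnorm v * vnorm (U.mulVec (Uᵀ.mulVec v)) :=
            dot_le _ _
        _ = vnorm v * t := by rw [vnorm_orth_mulVec hU]
    nlinarith

private lemma frob_sq_trace [DecidableEq ι'] (M : Matrix ι ι' ℝ) :
    frob M ^ 2 = (Mᵀ * M).trace := by
  rw [frob_sq, Finset.sum_comm, Matrix.trace]
  simp only [Matrix.diag, Matrix.mul_apply, Matrix.transpose_apply]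
  exact Finset.sum_congr rfl fun j _ => Finset.sum_congr rfl fun i _ => by ring

private lemma frob_eq_of_sq_eq {κ κ' : Type*} [Fintype κ] [Fintype κ'] {A : Matrix ι ι' ℝ}
    {B : Matrix κ κ' ℝ} (h : frob A ^ 2 = frob B ^ 2) : frob A = frob B :=
  le_antisymm (sq_le_sq_le (frob_nonneg A) (frob_nonneg B) h.le)
    (sq_le_sq_le (frob_nonneg B) (frob_nonneg A) h.ge)

private lemma proj_sub [DecidableEq ι] [DecidableEq ι'] (U : Matrix ι ι' ℝ)
    (hU : Uᵀ * U = 1) : (1 - U * Uᵀ)ᵀ * (1 - U * Uᵀ) = 1 - U * Uᵀ := by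
  rw [Matrix.transpose_sub, Matrix.transpose_one, Matrix.transpose_mul,
    Matrix.transpose_transpose]
  have h2 : U * Uᵀ * (U * Uᵀ) = U * Uᵀ := by
    rw [Matrix.mul_assoc U Uᵀ (U * Uᵀ), ← Matrix.mul_assoc Uᵀ U Uᵀ, hU, Matrix.one_mul]
  rw [Matrix.sub_mul, Matrix.mul_sub, Matrix.mul_sub, Matrix.one_mul, Matrix.mul_one, h2]
  simp only [Matrix.one_mul]
  abel

private lemma SD_symm {n r : ℕ} (U Us : Matrix (Fin n) (Fin r) ℝ) (hU : Uᵀ * U = 1)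
    (hUs : Usᵀ * Us = 1) : frob ((1 - Us * Usᵀ) * U) = frob ((1 - U * Uᵀ) * Us) := by
  have key : ∀ (V W : Matrix (Fin n) (Fin r) ℝ), Vᵀ * V = 1 → Wᵀ * W = 1 →
      frob ((1 - V * Vᵀ) * W) ^ 2 = (1 : Matrix (Fin r) (Fin r) ℝ).trace
        - ((Vᵀ * W)ᵀ * (Vᵀ * W)).trace := by
    intro V W hV hW
    rw [frob_sq_trace, Matrix.transpose_mul, Matrix.mul_assoc Wᵀ,
      ← Matrix.mul_assoc ((1 - V * Vᵀ)ᵀ), proj_sub V hV]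
    have expand : Wᵀ * ((1 - V * Vᵀ) * W) = 1 - (Vᵀ * W)ᵀ * (Vᵀ * W) := by
      rw [Matrix.sub_mul, Matrix.one_mul, Matrix.mul_sub, hW, Matrix.transpose_mul,
        Matrix.transpose_transpose]
      rw [Matrix.mul_assoc V Vᵀ W, ← Matrix.mul_assoc Wᵀ V (Vᵀ * W), ← Matrix.mul_assoc]
    rw [expand, Matrix.trace_sub]
  apply frob_eq_of_sq_eq
  rw [key Us U hUs hU, key U Us hU hUs]
  congr 1
  rw [Matrix.transpose_mul, Matrix.transpose_transpose, Matrix.transpose_mul,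
    Matrix.transpose_transpose, Matrix.trace_mul_comm]

end lemma33helpers

set_option maxHeartbeats 8000000 in
/-- **Lemma 3.3, part 2, matrix-level implications** (deterministic). -/
theorem lemma33_part2_matrix (n r q : ℕ) (U Ustar : Matrix (Fin n) (Fin r) ℝ)
    (Btil : Matrix (Fin r) (Fin q) ℝ) (bhat : Fin q → Fin r → ℝ) (δ : ℝ)
    (hU : Uᵀ * U = 1) (hUs : Ustarᵀ * Ustar = 1) (hrank : Btil.rank = r)
    (hδ1 : frob ((1 - U * Uᵀ) * Ustar) ≤ δ)
    (hδ2 : δ ≤ 0.1 / (spec Btil / sigMin Btil))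
    (hb : ∀ k, vnorm (Uᵀ.mulVec (Ustar.mulVec (matCol Btil k)) - bhat k) ≤
      0.4 * vnorm ((1 - U * Uᵀ).mulVec (Ustar.mulVec (matCol Btil k)))) :
    frob (Uᵀ * (Ustar * Btil) - Matrix.of fun (i : Fin r) (k : Fin q) => bhat k i) ≤
      0.4 * δ * spec Btil ∧
    frob (Ustar * Btil - U * Matrix.of fun (i : Fin r) (k : Fin q) => bhat k i) ≤
      Real.sqrt 1.16 * δ * spec Btil ∧
    0.9 * sigMin Btil ≤ sigMin (Matrix.of fun (i : Fin r) (k : Fin q) => bhat k i) ∧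
    spec (Matrix.of fun (i : Fin r) (k : Fin q) => bhat k i) ≤ (1 + 0.4 * δ) * spec Btil ∧
    spec (Matrix.of fun (i : Fin r) (k : Fin q) => bhat k i) ≤ 1.04 * spec Btil := by
  classical
  set Bh : Matrix (Fin r) (Fin q) ℝ :=
    Matrix.of fun (i : Fin r) (k : Fin q) => bhat k i with hBh
  set G : Matrix (Fin r) (Fin q) ℝ := Uᵀ * (Ustar * Btil) with hG
  set M0 : Matrix (Fin n) (Fin q) ℝ := (1 - U * Uᵀ) * (Ustar * Btil) with hM0
  have hδ0 : 0 ≤ δ := le_trans (frob_nonneg _) hδ1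
  have hspec0 : 0 ≤ spec Btil := spec_nonneg _
  have hsig0 : 0 ≤ sigMin Btil := sigMin_nonneg _
  have hcolM : ∀ k, matCol M0 k = (1 - U * Uᵀ).mulVec (Ustar.mulVec (matCol Btil k)) := by
    intro k; rw [hM0, matCol_mul, matCol_mul]
  have hcolG : ∀ k, matCol G k = Uᵀ.mulVec (Ustar.mulVec (matCol Btil k)) := by
    intro k; rw [hG, matCol_mul, matCol_mul]
  have hcolBh : ∀ k, matCol Bh k = bhat k := fun k => rfl
  have hM0f : frob M0 ≤ δ * spec Btil := by
    rw [hM0, ← Matrix.mul_assoc]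
    have h1 := frob_mul_le ((1 - U * Uᵀ) * Ustar) Btil
    have h2 := mul_le_mul_of_nonneg_right hδ1 hspec0
    exact h1.trans h2
  -- part (a)
  have hA : frob (G - Bh) ≤ 0.4 * (δ * spec Btil) := by
    apply sq_le_sq_le (frob_nonneg _) (by positivity)
    rw [frob_sq_cols]
    have hsum : ∑ k, vnorm (matCol (G - Bh) k) ^ 2
        ≤ ∑ k, (0.4 * vnorm (matCol M0 k)) ^ 2 := by
      apply Finset.sum_le_sum; intro k _
      apply pow_le_pow_left₀ (vnorm_nonneg _)
      rw [matCol_sub, hcolG, hcolBh, hcolM]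
      exact hb k
    refine hsum.trans ?_
    have heq : ∑ k, (0.4 * vnorm (matCol M0 k)) ^ 2 = 0.4 ^ 2 * frob M0 ^ 2 := by
      rw [frob_sq_cols, Finset.mul_sum]
      exact Finset.sum_congr rfl fun k _ => by ring
    rw [heq]
    nlinarith [pow_le_pow_left₀ (frob_nonneg M0) hM0f 2]
  -- global numeric facts
  have hκ : δ * spec Btil ≤ 0.1 * sigMin Btil ∧ δ ≤ 0.1 := by
    rcases eq_or_lt_of_le hsig0 with h0 | hpos
    · have hd : δ ≤ 0 := by
        rw [← h0] at hδ2; simpa using hδ2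
      have hδe : δ = 0 := le_antisymm hd hδ0
      constructor
      · rw [hδe, ← h0]; norm_num
      · rw [hδe]; norm_num
    · have hne : {c | ∃ w, vnorm w = 1 ∧ c = vnorm (Btilᵀ.mulVec w)}.Nonempty := by
        by_contra hc
        rw [Set.not_nonempty_iff_eq_empty] at hc
        have : sigMin Btil = 0 := by rw [sigMin, hc, Real.sInf_empty]
        rw [this] at hpos; exact lt_irrefl _ hpos
      obtain ⟨c₀, w₀, hw₀, hc₀⟩ := hne
      have hle : sigMin Btil ≤ spec Btil := by
        have h1 : sigMin Btil * vnorm w₀ ≤ vnorm (Btilᵀ.mulVec w₀) := sigMin_mulVec_ge _ _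
        have h2 : vnorm (Btilᵀ.mulVec w₀) ≤ spec Btil * vnorm w₀ :=
          transpose_mulVec_le_spec _ _
        rw [hw₀] at h1 h2; simpa using h1.trans h2
      have hsp : 0 < spec Btil := lt_of_lt_of_le hpos hle
      have hratio : 0 < spec Btil / sigMin Btil := div_pos hsp hpos
      have h3 : δ * (spec Btil / sigMin Btil) ≤ 0.1 := (le_div_iff₀ hratio).mp hδ2
      have h4 : δ * spec Btil ≤ 0.1 * sigMin Btil := by
        have h5 : δ * spec Btil = δ * (spec Btil / sigMin Btil) * sigMin Btil := by
          field_simp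
        rw [h5]
        exact mul_le_mul_of_nonneg_right h3 hpos.le
      refine ⟨h4, ?_⟩
      have h6 : δ * spec Btil ≤ 0.1 * spec Btil := by nlinarith
      exact le_of_mul_le_mul_right (by linarith [h6]) hsp
  obtain ⟨hκ1, hκ2⟩ := hκ
  -- part (b)
  have hB : frob (Ustar * Btil - U * Bh) ≤ Real.sqrt 1.16 * δ * spec Btil := by
    have hrt : Real.sqrt 1.16 ^ 2 = 1.16 := Real.sq_sqrt (by norm_num)
    apply sq_le_sq_le (frob_nonneg _) (by positivity)
    rw [frob_sq_cols]
    have hsum : ∑ k, vnorm (matCol (Ustar * Btil - U * Bh) k) ^ 2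
        ≤ ∑ k, 1.16 * vnorm (matCol M0 k) ^ 2 := by
      apply Finset.sum_le_sum; intro k _
      set x := Ustar.mulVec (matCol Btil k) with hx
      set c := Uᵀ.mulVec x - bhat k with hc
      have hcolX : matCol (Ustar * Btil - U * Bh) k = (1 - U * Uᵀ).mulVec x + U.mulVec c := by
        rw [matCol_sub, matCol_mul, matCol_mul, hcolBh, hc, hx, Matrix.sub_mulVec,
          Matrix.one_mulVec, Matrix.mulVec_sub]
        simp only [Matrix.mulVec_mulVec, ← Matrix.mul_assoc]
        abel
      have horth : ((1 - U * Uᵀ).mulVec x) ⬝ᵥ (U.mulVec c) = 0 := by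
        rw [dot_mulVec_eq]
        have hz : (1 - U * Uᵀ)ᵀ * U = 0 := by
          rw [Matrix.transpose_sub, Matrix.transpose_one, Matrix.transpose_mul,
            Matrix.transpose_transpose, Matrix.sub_mul, Matrix.one_mul,
            Matrix.mul_assoc, hU, Matrix.mul_one, sub_self]
        rw [hz, Matrix.zero_mulVec, dotProduct_zero]
      have hpy : vnorm (matCol (Ustar * Btil - U * Bh) k) ^ 2
          = vnorm ((1 - U * Uᵀ).mulVec x) ^ 2 + vnorm c ^ 2 := by
        rw [hcolX, pyth _ _ horth, vnorm_orth_mulVec hU]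
      have hbk : vnorm c ≤ 0.4 * vnorm ((1 - U * Uᵀ).mulVec x) := hb k
      rw [hpy, hcolM]
      nlinarith [vnorm_nonneg c, vnorm_nonneg ((1 - U * Uᵀ).mulVec x)]
    refine hsum.trans ?_
    have heq : ∑ k, 1.16 * vnorm (matCol M0 k) ^ 2 = 1.16 * frob M0 ^ 2 := by
      rw [frob_sq_cols, Finset.mul_sum]
    rw [heq]
    have hexp : (Real.sqrt 1.16 * δ * spec Btil) ^ 2 = 1.16 * (δ * spec Btil) ^ 2 := by
      rw [mul_pow, mul_pow, hrt]; ring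
    rw [hexp]
    nlinarith [pow_le_pow_left₀ (frob_nonneg M0) hM0f 2]
  -- part (c)
  have hC : 0.9 * sigMin Btil ≤ sigMin Bh := by
    by_cases hex : ∃ w : Fin r → ℝ, vnorm w = 1
    · obtain ⟨w₀, hw₀⟩ := hex
      have hBh0 : sigMin Bh = sInf {c | ∃ w, vnorm w = 1 ∧ c = vnorm (Bhᵀ.mulVec w)} := rfl
      rw [hBh0]
      refine le_csInf ⟨vnorm (Bhᵀ.mulVec w₀), w₀, hw₀, rfl⟩ ?_
      rintro c ⟨w, hw, rfl⟩
      set y := U.mulVec w with hy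
      have hyn : vnorm y = 1 := by rw [hy, vnorm_orth_mulVec hU, hw]
      have hdec : y = Ustar.mulVec (Ustarᵀ.mulVec y) + (1 - Ustar * Ustarᵀ).mulVec y := by
        rw [Matrix.mulVec_mulVec, Matrix.sub_mulVec, Matrix.one_mulVec]; abel
      have horth : (Ustar.mulVec (Ustarᵀ.mulVec y)) ⬝ᵥ ((1 - Ustar * Ustarᵀ).mulVec y)
          = 0 := by
        rw [dot_mulVec_eq]
        have hz : Ustarᵀ * (1 - Ustar * Ustarᵀ) = 0 := by
          rw [Matrix.mul_sub, Matrix.mul_one, ← Matrix.mul_assoc, hUs, Matrix.one_mul,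
            sub_self]
        rw [hz, Matrix.zero_mulVec, dotProduct_zero]
      have hpy : vnorm y ^ 2 = vnorm (Ustarᵀ.mulVec y) ^ 2
          + vnorm ((1 - Ustar * Ustarᵀ).mulVec y) ^ 2 := by
        conv_lhs => rw [hdec]
        rw [pyth _ _ horth, vnorm_orth_mulVec hUs]
      have hperp : vnorm ((1 - Ustar * Ustarᵀ).mulVec y) ≤ δ := by
        rw [hy, Matrix.mulVec_mulVec]
        have h1 := mulVec_le_frob ((1 - Ustar * Ustarᵀ) * U) w
        rw [hw, mul_one, SD_symm U Ustar hU hUs] at h1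
        exact h1.trans hδ1
      have hUsy : 0.99 ≤ vnorm (Ustarᵀ.mulVec y) := by
        have h1 : 1 - δ ^ 2 ≤ vnorm (Ustarᵀ.mulVec y) ^ 2 := by
          rw [hyn] at hpy
          nlinarith [vnorm_nonneg ((1 - Ustar * Ustarᵀ).mulVec y), hperp]
        apply sq_le_sq_le (by norm_num) (vnorm_nonneg _)
        nlinarith
      have hGw : 0.99 * sigMin Btil ≤ vnorm (Gᵀ.mulVec w) := by
        have hGT : Gᵀ.mulVec w = Btilᵀ.mulVec (Ustarᵀ.mulVec y) := by
          rw [hG, hy, Matrix.transpose_mul, Matrix.transpose_mul,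
            Matrix.transpose_transpose, Matrix.mulVec_mulVec, Matrix.mulVec_mulVec,
            Matrix.mul_assoc]
        rw [hGT]
        have h2 := sigMin_mulVec_ge Btil (Ustarᵀ.mulVec y)
        have h3 := mul_le_mul_of_nonneg_left hUsy hsig0
        linarith
      have hDw : vnorm ((G - Bh)ᵀ.mulVec w) ≤ 0.4 * (δ * spec Btil) := by
        have h1 := mulVec_le_frob ((G - Bh)ᵀ) w
        rw [hw, mul_one, frob_transpose] at h1
        exact h1.trans hA
      have htri : vnorm (Gᵀ.mulVec w)
          ≤ vnorm ((G - Bh)ᵀ.mulVec w) + vnorm (Bhᵀ.mulVec w) := by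
        have hsplit : Gᵀ.mulVec w = (G - Bh)ᵀ.mulVec w + Bhᵀ.mulVec w := by
          rw [Matrix.transpose_sub, Matrix.sub_mulVec]; abel
        rw [hsplit]; exact vnorm_triangle _ _
      linarith
    · have hempty : ∀ X : Matrix (Fin r) (Fin q) ℝ, sigMin X = 0 := by
        intro X
        have hse : {c | ∃ w, vnorm w = 1 ∧ c = vnorm (Xᵀ.mulVec w)} = ∅ := by
          ext c
          simp only [Set.mem_setOf_eq, Set.mem_empty_iff_false, iff_false, not_exists]
          intro w hw
          exact absurd ⟨w, hw.1⟩ hex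
        rw [sigMin, hse, Real.sInf_empty]
      rw [hempty Btil, hempty Bh]; norm_num
  -- part (d)
  have hD1 : spec Bh ≤ (1 + 0.4 * δ) * spec Btil := by
    have hrhs : 0 ≤ (1 + 0.4 * δ) * spec Btil :=
      mul_nonneg (by linarith) hspec0
    by_cases hne : {c | ∃ z, vnorm z = 1 ∧ c = vnorm (Bh.mulVec z)}.Nonempty
    · rw [spec]
      apply csSup_le hne
      rintro c ⟨z, hz, rfl⟩
      have h1 : vnorm (G.mulVec z) ≤ spec Btil := by
        rw [hG, ← Matrix.mulVec_mulVec, ← Matrix.mulVec_mulVec]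
        have ha1 := vnorm_orthT_mulVec_le hU (Ustar.mulVec (Btil.mulVec z))
        have ha2 := vnorm_orth_mulVec hUs (Btil.mulVec z)
        have ha3 := mulVec_le_spec Btil z
        rw [hz, mul_one] at ha3
        linarith
      have h2 : vnorm ((Bh - G).mulVec z) ≤ 0.4 * (δ * spec Btil) := by
        have hb1 := mulVec_le_frob (Bh - G) z
        rw [hz, mul_one, frob_sub_comm] at hb1
        exact hb1.trans hA
      have hsplit : Bh.mulVec z = G.mulVec z + (Bh - G).mulVec z := by
        rw [Matrix.sub_mulVec]; abel
      have h3 : vnorm (Bh.mulVec z) ≤ vnorm (G.mulVec z) + vnorm ((Bh - G).mulVec z) := by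
        rw [hsplit]; exact vnorm_triangle _ _
      nlinarith
    · rw [spec, Set.not_nonempty_iff_eq_empty.mp hne, Real.sSup_empty]
      exact hrhs
  have hD2 : spec Bh ≤ 1.04 * spec Btil := by nlinarith
  exact ⟨by rw [mul_assoc]; exact hA, hB, hC, hD1, hD2⟩
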